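/- Let X be a uniform space and μ ∈ Meas(X). Then μ is a uniform measure if and only if for every uniform space Y, every ν ∈ Meas(Y) and every semiuniform f : X × Y → ℝ, the function y ↦ μ(x ↦ f(x,y)) belongs to Ub(Y) and μ(x ↦ ν(y ↦ f(x,y))) = ν(y ↦ μ(x ↦ f(x,y))). -/

import Mathlib

noncomputable section

open Filter Topology

/-- `f` is a bounded uniformly continuous real-valued function,
i.e. a member of `Ub(X)`. -/
def IsUb {X : Type*} [UniformSpace X] (f : X → ℝ) : Prop :=
  UniformContinuous f ∧ ∃ C : ℝ, ∀ x, |f x| ≤ C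

/-- Supremum norm of a real-valued function. -/
def supNorm {α : Type*} (f : α → ℝ) : ℝ :=
  sSup (Set.range fun x => |f x|)

/-- `μ` is (the restriction to `Ub(X)` of) a norm-continuous linear functional on `Ub(X)`,
i.e. a member of `Meas(X)`.  It is represented as a bare map on all functions;
only its values on `Ub(X)` are relevant. -/
def IsMeas {X : Type*} [UniformSpace X] (μ : (X → ℝ) → ℝ) : Prop :=
  (∀ f g : X → ℝ, IsUb f → IsUb g → μ (f + g) = μ f + μ g) ∧
  (∀ (c : ℝ) (f : X → ℝ), IsUb f → μ (c • f) = c * μ f) ∧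
  (∃ C : ℝ, ∀ f : X → ℝ, IsUb f → (∀ x, |f x| ≤ 1) → |μ f| ≤ C)

/-- The dual norm on `Meas(X)`:  `‖μ‖ = sup {|μ f| : f ∈ Ub(X), ‖f‖ ≤ 1}`. -/
def measNorm {X : Type*} [UniformSpace X] (μ : (X → ℝ) → ℝ) : ℝ :=
  sSup {r : ℝ | ∃ f : X → ℝ, IsUb f ∧ (∀ x, |f x| ≤ 1) ∧ r = |μ f|}

/-- `μ` is a positive functional:  `μ f ≥ 0` whenever `f ∈ Ub(X)` and `f ≥ 0`. -/
def IsPositive {X : Type*} [UniformSpace X] (μ : (X → ℝ) → ℝ) : Prop :=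
  ∀ f : X → ℝ, IsUb f → (∀ x, 0 ≤ f x) → 0 ≤ μ f

/-- `μ` is a *uniform measure*: on every norm-bounded uniformly equicontinuous set
`H ⊆ Ub(X)`, `μ` is continuous for the topology of pointwise convergence. -/
def IsUniformMeasure {X : Type*} [UniformSpace X] (μ : (X → ℝ) → ℝ) : Prop :=
  ∀ H : Set (X → ℝ),
    (∃ C : ℝ, ∀ f ∈ H, ∀ x, |f x| ≤ C) →
    H.UniformEquicontinuous →
    ∀ f₀ ∈ H, ∀ ε : ℝ, 0 < ε →
      ∃ (K : Finset X) (δ : ℝ), 0 < δ ∧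
        ∀ f ∈ H, (∀ x ∈ K, |f x - f₀ x| < δ) → |μ f - μ f₀| < ε

/-- A *semiuniform* function on `X × Y`, i.e. a member of `Ub(X ⋉ Y)` where `X ⋉ Y` is the
semiuniform product: `f` is bounded, the family of sections `x ↦ f (x, y)` (for `y ∈ Y`)
is uniformly equicontinuous on `X`, and every section `y ↦ f (x, y)` is uniformly
continuous on `Y`. -/
def Semiuniform {X Y : Type*} [UniformSpace X] [UniformSpace Y] (f : X × Y → ℝ) : Prop :=
  (∃ C : ℝ, ∀ p, |f p| ≤ C) ∧
  UniformEquicontinuous (fun y : Y => fun x : X => f (x, y)) ∧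
  ∀ x : X, UniformContinuous fun y : Y => f (x, y)

/-- The direct product `μ ⊗ ν`, evaluated at `f : X × Y → ℝ`:
`(μ ⊗ ν)(f) = μ (x ↦ ν (y ↦ f (x, y)))`. -/
def dirProd {X Y : Type*} (μ : (X → ℝ) → ℝ) (ν : (Y → ℝ) → ℝ) (f : X × Y → ℝ) : ℝ :=
  μ fun x => ν fun y => f (x, y)

/-- Convolution: `(μ ⋆ ν)(f) = μ (x ↦ ν (y ↦ f (x · y)))`. -/
def conv {G : Type*} [Mul G] (μ ν : (G → ℝ) → ℝ) : (G → ℝ) → ℝ :=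
  fun f => μ fun x => ν fun y => f (x * y)

/-- The weak-* topology on `Meas(X)`: the topology of pointwise convergence on `Ub(X)`. -/
def weakStarMeas (X : Type*) [UniformSpace X] :
    TopologicalSpace {ν : (X → ℝ) → ℝ // IsMeas ν} :=
  TopologicalSpace.induced
    (fun ν => fun f : {f : X → ℝ // IsUb f} => ν.1 f.1) Pi.topologicalSpace

universe u

/-!
By linearity, `μ` is a uniform measure iff on every bounded uniformly equicontinuous set `H` it is
uniformly continuous for the uniformity of pointwise convergence (continuity at `0` on `H - H`
gives uniform continuity on `H`). Taking `Y = H` and `f (x, h) = h x` shows that the condition of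
the theorem forces this. Conversely, for semiuniform `f` the map `y ↦ f (·, y)` is uniformly
continuous from `Y` onto such a set, hence so is `y ↦ μ (f (·, y))`.

For the exchange of `μ` and `ν`: by Hahn–Banach in the finite-dimensional space of values on
finitely many test functions, `ν` is a weak-* limit of discrete functionals `∑ cⱼ δ_{yⱼ}` with
`∑ |cⱼ| ≤ ‖ν‖`, for which the exchange is just linearity. The functions `x ↦ ρ (f (x, ·))`, with
`ρ` in a ball of `Meas(Y)`, form a bounded uniformly equicontinuous set, on which `μ` is
pointwise continuous, so the identity passes to the limit.
-/

open scoped Pointwise Uniformity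

section Ub

variable {X : Type*} [UniformSpace X] {f g : X → ℝ}

lemma IsUb.add (hf : IsUb f) (hg : IsUb g) : IsUb (f + g) := by
  obtain ⟨hfc, Cf, hCf⟩ := hf
  obtain ⟨hgc, Cg, hCg⟩ := hg
  exact ⟨hfc.add hgc, Cf + Cg, fun x => (abs_add_le _ _).trans (add_le_add (hCf x) (hCg x))⟩

lemma IsUb.const_smul (c : ℝ) (hf : IsUb f) : IsUb (c • f) := by
  obtain ⟨hfc, Cf, hCf⟩ := hf
  refine ⟨hfc.const_smul c, |c| * Cf, fun x => ?_⟩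
  rw [Pi.smul_apply, smul_eq_mul, abs_mul]
  exact mul_le_mul_of_nonneg_left (hCf x) (abs_nonneg c)

lemma IsUb.sub (hf : IsUb f) (hg : IsUb g) : IsUb (f - g) := by
  simpa [sub_eq_add_neg] using hf.add (hg.const_smul (-1))

lemma isUb_sum_mul {ι : Type*} (s : Finset ι) (c : ι → ℝ) {h : ι → X → ℝ}
    (hh : ∀ j ∈ s, IsUb (h j)) : IsUb fun x => ∑ j ∈ s, c j * h j x := by
  classical
  induction s using Finset.induction_on with
  | empty =>
    simp only [Finset.sum_empty]
    exact ⟨uniformContinuous_const, 0, fun _ => by simp⟩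
  | insert a s ha ih =>
    simp only [Finset.sum_insert ha]
    exact ((hh a (s.mem_insert_self a)).const_smul (c a)).add
      (ih fun j hj => hh j (Finset.mem_insert_of_mem hj))

end Ub

section Meas

variable {X : Type*} [UniformSpace X] {μ : (X → ℝ) → ℝ} {f g : X → ℝ}

lemma IsMeas.map_zero (hμ : IsMeas μ) : μ 0 = 0 := by
  simpa using hμ.2.1 0 0 ⟨uniformContinuous_const, 0, fun _ => by simp⟩

lemma IsMeas.map_sub (hμ : IsMeas μ) (hf : IsUb f) (hg : IsUb g) : μ (f - g) = μ f - μ g := by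
  rw [sub_eq_add_neg, ← neg_one_smul ℝ g, hμ.1 _ _ hf (hg.const_smul _), hμ.2.1 _ _ hg]
  ring

lemma IsMeas.map_sum_mul (hμ : IsMeas μ) {ι : Type*} (s : Finset ι) (c : ι → ℝ)
    {h : ι → X → ℝ} (hh : ∀ j ∈ s, IsUb (h j)) :
    μ (fun x => ∑ j ∈ s, c j * h j x) = ∑ j ∈ s, c j * μ (h j) := by
  classical
  induction s using Finset.induction_on with
  | empty =>
    simp only [Finset.sum_empty]
    exact hμ.map_zero
  | insert a s ha ih =>
    have hs : ∀ j ∈ s, IsUb (h j) := fun j hj => hh j (Finset.mem_insert_of_mem hj)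
    simp only [Finset.sum_insert ha]
    rw [← ih hs, ← hμ.2.1 _ _ (hh a (s.mem_insert_self a))]
    exact hμ.1 _ _ ((hh a (s.mem_insert_self a)).const_smul _) (isUb_sum_mul s c hs)

/-- `‖ν‖ ≤ C`, in a form that avoids the supremum defining the norm. -/
def MeasNormLE (ν : (X → ℝ) → ℝ) (C : ℝ) : Prop :=
  ∀ h : X → ℝ, IsUb h → ∀ M : ℝ, 0 ≤ M → (∀ x, |h x| ≤ M) → |ν h| ≤ C * M

variable (X) in
def measBall (C : ℝ) : Set ((X → ℝ) → ℝ) :=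
  {ρ | IsMeas ρ ∧ MeasNormLE ρ C}

lemma IsMeas.exists_measNormLE (hμ : IsMeas μ) : ∃ C, 0 < C ∧ MeasNormLE μ C := by
  obtain ⟨C, hC⟩ := hμ.2.2
  refine ⟨max C 1, lt_max_of_lt_right one_pos, fun f hf M hM hfM => ?_⟩
  rcases hM.eq_or_lt with rfl | hM
  · obtain rfl : f = 0 := funext fun x => abs_nonpos_iff.1 (hfM x)
    simp [hμ.map_zero]
  have hscaled := hC (M⁻¹ • f) (hf.const_smul _) fun x => by
    rw [Pi.smul_apply, smul_eq_mul, abs_mul, abs_inv, abs_of_pos hM, inv_mul_le_iff₀ hM, mul_one]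
    exact hfM x
  rw [hμ.2.1 _ _ hf, abs_mul, abs_inv, abs_of_pos hM, inv_mul_le_iff₀ hM] at hscaled
  calc |μ f| ≤ M * C := hscaled
    _ ≤ max C 1 * M := by rw [mul_comm]; gcongr; exact le_max_left _ _

lemma sum_mul_apply_mem_measBall {κ : Type*} [Fintype κ] {c : κ → ℝ} {C : ℝ}
    (hc : ∑ j, |c j| ≤ C) (y : κ → X) : (fun h : X → ℝ => ∑ j, c j * h (y j)) ∈ measBall X C := by
  have hnorm : MeasNormLE (fun h : X → ℝ => ∑ j, c j * h (y j)) C := fun h _ M hM hhM =>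
    calc |∑ j, c j * h (y j)| ≤ ∑ j, |c j| * M := (Finset.abs_sum_le_sum_abs _ _).trans
          (Finset.sum_le_sum fun j _ => by rw [abs_mul]; gcongr; exact hhM _)
      _ ≤ C * M := by rw [← Finset.sum_mul]; gcongr
  refine ⟨⟨fun f g _ _ => ?_, fun a f _ => ?_, C, fun h hh hh1 => ?_⟩, hnorm⟩
  · simp only [Pi.add_apply, mul_add, Finset.sum_add_distrib]
  · simp only [Pi.smul_apply, smul_eq_mul, Finset.mul_sum]
    exact Finset.sum_congr rfl fun j _ => by ring
  · simpa using hnorm h hh 1 zero_le_one hh1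

end Meas

section Approximation

variable {Y : Type*} [UniformSpace Y] {ν : (Y → ℝ) → ℝ} {C : ℝ} {ι : Type*} [Fintype ι]
  {h : ι → Y → ℝ}

lemma IsMeas.mem_closure_convexHull [Nonempty Y] (hν : IsMeas ν) (hC : 0 < C)
    (hνC : MeasNormLE ν C) (hh : ∀ i, IsUb (h i)) :
    (fun i => ν (h i)) ∈ closure (convexHull ℝ {v | ∃ s y, |s| ≤ C ∧ v = fun i => s * h i y}) := by
  classical
  by_contra hT
  obtain ⟨L, u, hLu, huT⟩ :=
    geometric_hahn_banach_closed_point (convex_convexHull ℝ _).closure isClosed_closure hT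
  -- `L = ∑ aᵢ · evalᵢ` yields `b = ∑ aᵢ hᵢ` with `C ‖b‖ ≤ u`, whereas `ν b = L (ν ∘ h) > u`
  set a : ι → ℝ := fun i => L fun j => if i = j then 1 else 0
  have hL : ∀ v, L v = ∑ i, a i * v i := fun v => by
    rw [← L.coe_coe, LinearMap.pi_apply_eq_sum_univ]
    exact Finset.sum_congr rfl fun i _ => by rw [smul_eq_mul, mul_comm]; rfl
  set b : Y → ℝ := fun y => ∑ i, a i * h i y
  have hb : ∀ y, C * |b y| ≤ u := fun y => by
    have hLs : ∀ s, |s| ≤ C → s * b y < u := fun s hs => by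
      have := hLu _ (subset_closure (subset_convexHull ℝ _ ⟨s, y, hs, rfl⟩))
      rw [hL] at this
      calc s * b y = ∑ i, a i * (s * h i y) := by
            simp only [b, Finset.mul_sum]
            exact Finset.sum_congr rfl fun i _ => by ring
        _ < u := this
    have hCabs : |C| ≤ C := (abs_of_pos hC).le
    rw [← abs_of_pos hC, ← abs_mul, abs_le]
    constructor <;> linarith [hLs C hCabs, hLs (-C) (by rwa [abs_neg])]
  have hu : 0 ≤ u := (mul_nonneg hC.le (abs_nonneg _)).trans (hb (Classical.arbitrary Y))
  have hνb : |ν b| ≤ u := by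
    simpa [mul_div_cancel₀ _ hC.ne'] using hνC b (isUb_sum_mul _ a fun i _ => hh i) (u / C)
      (div_nonneg hu hC.le) fun y => (le_div_iff₀' hC).2 (hb y)
  have hνb_eq : ν b = L fun i => ν (h i) := by
    rw [hL]
    exact hν.map_sum_mul _ a fun i _ => hh i
  linarith [le_abs_self (ν b)]

lemma IsMeas.exists_sum_mul_apply_approx (hν : IsMeas ν) (hC : 0 < C) (hνC : MeasNormLE ν C)
    (hh : ∀ i, IsUb (h i)) {η : ℝ} (hη : 0 < η) :
    ∃ (κ : Type) (_ : Fintype κ) (c : κ → ℝ) (y : κ → Y),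
      ∑ j, |c j| ≤ C ∧ ∀ i, |∑ j, c j * h i (y j) - ν (h i)| < η := by
  rcases isEmpty_or_nonempty Y with hY | hY
  · refine ⟨Empty, inferInstance, isEmptyElim, isEmptyElim, by simpa using hC.le, fun i => ?_⟩
    simpa [Subsingleton.elim (h i) 0, hν.map_zero] using hη
  obtain ⟨b, hb, hTb⟩ := Metric.mem_closure_iff.1 (hν.mem_closure_convexHull hC hνC hh) η hη
  obtain ⟨κ, _, w, z, hw0, hw1, hz, rfl⟩ := mem_convexHull_iff_exists_fintype.1 hb
  choose s y hs hz using hz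
  refine ⟨κ, inferInstance, fun j => w j * s j, y, ?_, fun i => ?_⟩
  · calc ∑ j, |w j * s j| ≤ ∑ j, w j * C := Finset.sum_le_sum fun j _ => by
          rw [abs_mul, abs_of_nonneg (hw0 j)]; exact mul_le_mul_of_nonneg_left (hs j) (hw0 j)
      _ = C := by rw [← Finset.sum_mul, hw1, one_mul]
  · have := (dist_le_pi_dist _ _ i).trans_lt hTb
    rw [Real.dist_eq, abs_sub_comm] at this
    have hsum : ∑ j, w j * s j * h i (y j) = (∑ j, w j • z j) i := by
      simp [Finset.sum_apply, hz, mul_assoc]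
    rwa [hsum]

end Approximation

section UniformMeasure

variable {X : Type*} [UniformSpace X] {μ : (X → ℝ) → ℝ}

lemma uniformEquicontinuous_of_dist_le {ι β α : Type*} [UniformSpace β] [PseudoMetricSpace α]
    {F : ι → β → α} (hF : UniformEquicontinuous F) {C : ℝ} (hC : 0 ≤ C) {H : Set (β → ℝ)}
    (hH : ∀ φ ∈ H, ∀ x x' M, 0 ≤ M → (∀ i, dist (F i x) (F i x') ≤ M) →
      dist (φ x) (φ x') ≤ C * M) :
    H.UniformEquicontinuous := by
  rw [Metric.uniformEquicontinuous_iff_right] at hF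
  rw [Set.UniformEquicontinuous, Metric.uniformEquicontinuous_iff_right]
  intro ε hε
  have hε' : 0 < ε / (C + 1) := by positivity
  filter_upwards [hF _ hε'] with p hp
  rintro ⟨φ, hφ⟩
  calc dist (φ p.1) (φ p.2) ≤ C * (ε / (C + 1)) := hH φ hφ _ _ _ hε'.le fun i => (hp i).le
    _ < (C + 1) * (ε / (C + 1)) := mul_lt_mul_of_pos_right (lt_add_one C) hε'
    _ = ε := mul_div_cancel₀ _ (by positivity)

lemma exists_finset_dist_lt_subset_of_mem_nhds {ι α : Type*} [PseudoMetricSpace α]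
    {f₀ : ι → α} {t : Set (ι → α)} (ht : t ∈ 𝓝 f₀) :
    ∃ (K : Finset ι) (δ : ℝ), 0 < δ ∧ ∀ f, (∀ i ∈ K, dist (f i) (f₀ i) < δ) → f ∈ t := by
  rw [nhds_pi, (hasBasis_pi fun i => Metric.nhds_basis_ball).mem_iff] at ht
  obtain ⟨⟨I, r⟩, ⟨hI, hr⟩, hIt⟩ := ht
  have hsmall : ∀ᶠ δ in 𝓝[>] (0 : ℝ), (∀ i ∈ I, δ < r i) ∧ 0 < δ :=
    ((eventually_all_finite hI).2 fun i hi =>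
      nhdsWithin_le_nhds (gt_mem_nhds (hr i hi))).and self_mem_nhdsWithin
  obtain ⟨δ, hδI, hδ⟩ := hsmall.exists
  exact ⟨hI.toFinset, δ, hδ, fun f hf => hIt fun i hi =>
    (hf i (hI.mem_toFinset.2 hi)).trans (hδI i hi)⟩

lemma IsUniformMeasure.uniformContinuous (hu : IsUniformMeasure μ) (hμ : IsMeas μ)
    {H : Set (X → ℝ)} (hb : ∃ C, ∀ f ∈ H, ∀ x, |f x| ≤ C) (he : H.UniformEquicontinuous) :
    UniformContinuous fun f : H => μ f := by
  obtain ⟨C, hC⟩ := hb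
  have hUb : ∀ f ∈ H, IsUb f := fun f hf => ⟨he.uniformContinuous ⟨f, hf⟩, C, hC f hf⟩
  rw [UniformContinuous, Metric.uniformity_basis_dist.tendsto_right_iff]
  intro ε hε
  rcases isEmpty_or_nonempty H with hH | ⟨f₁, hf₁⟩
  · exact .of_forall fun p => isEmptyElim p.1
  have hDb : ∀ d ∈ H - H, ∀ x, |d x| ≤ C + C := by
    rintro _ ⟨f, hf, g, hg, rfl⟩ x
    exact (abs_sub _ _).trans (add_le_add (hC f hf x) (hC g hg x))
  have hDe : (H - H).UniformEquicontinuous := by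
    refine uniformEquicontinuous_of_dist_le he zero_le_two ?_
    rintro _ ⟨f, hf, g, hg, rfl⟩ x x' M - hM
    calc dist (f x - g x) (f x' - g x') ≤ dist (f x) (f x') + dist (g x) (g x') :=
          dist_sub_sub_le _ _ _ _
      _ ≤ 2 * M := by linarith [hM ⟨f, hf⟩, hM ⟨g, hg⟩]
  obtain ⟨K, δ, hδ, hK⟩ := hu (H - H) ⟨_, hDb⟩ hDe _ (Set.sub_mem_sub hf₁ hf₁) ε hε
  have hproj : ∀ x, UniformContinuous fun f : H => f.1 x := fun x =>
    (Pi.uniformContinuous_proj _ x).comp uniformContinuous_subtype_val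
  have hnear : ∀ᶠ p in 𝓤 H, ∀ x ∈ K, dist (p.1.1 x) (p.2.1 x) < δ :=
    (eventually_all_finset K).2 fun x _ => mem_map.1 (hproj x (Metric.dist_mem_uniformity hδ))
  filter_upwards [hnear] with ⟨⟨f, hf⟩, ⟨g, hg⟩⟩ hfg
  have := hK (f - g) (Set.sub_mem_sub hf hg) fun x hx => by simpa [Real.dist_eq] using hfg x hx
  rwa [hμ.map_sub (hUb f hf) (hUb g hg), hμ.map_sub (hUb f₁ hf₁) (hUb f₁ hf₁), sub_self,
    sub_zero, ← Real.dist_eq] at this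

lemma isUniformMeasure_of_uniformContinuous
    (h : ∀ H : Set (X → ℝ), (∃ C, ∀ f ∈ H, ∀ x, |f x| ≤ C) → H.UniformEquicontinuous →
      UniformContinuous fun f : H => μ f) :
    IsUniformMeasure μ := by
  intro H hb he f₀ hf₀ ε hε
  have hcont := (h H hb he).continuous.continuousAt (x := ⟨f₀, hf₀⟩)
  obtain ⟨t, ht, htH⟩ := (mem_nhds_subtype H _ _).1 (hcont (Metric.ball_mem_nhds _ hε))
  obtain ⟨K, δ, hδ, hKt⟩ := exists_finset_dist_lt_subset_of_mem_nhds ht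
  refine ⟨K, δ, hδ, fun f hf hfK => ?_⟩
  have := htH (a := ⟨f, hf⟩) (hKt f fun x hx => by simpa [Real.dist_eq] using hfK x hx)
  simpa [Real.dist_eq] using this

end UniformMeasure

section Semiuniform

variable {X Y : Type*} [UniformSpace X] [UniformSpace Y] {f : X × Y → ℝ}

lemma Semiuniform.isUb_left (hf : Semiuniform f) (y : Y) : IsUb fun x => f (x, y) := by
  obtain ⟨⟨B, hB⟩, hsec, -⟩ := hf
  exact ⟨hsec.uniformContinuous y, B, fun x => hB (x, y)⟩

lemma Semiuniform.isUb_right (hf : Semiuniform f) (x : X) : IsUb fun y => f (x, y) := by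
  obtain ⟨⟨B, hB⟩, -, hyc⟩ := hf
  exact ⟨hyc x, B, fun y => hB (x, y)⟩

lemma semiuniform_eval {H : Set (X → ℝ)} (hb : ∃ C, ∀ f ∈ H, ∀ x, |f x| ≤ C)
    (he : H.UniformEquicontinuous) : Semiuniform fun p : X × H => p.2.1 p.1 := by
  obtain ⟨C, hC⟩ := hb
  exact ⟨⟨C, fun p => hC _ p.2.2 p.1⟩, he,
    fun x => (Pi.uniformContinuous_proj _ x).comp uniformContinuous_subtype_val⟩

lemma Semiuniform.exists_bound_image_measBall (hf : Semiuniform f) (C : ℝ) :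
    ∃ B, ∀ φ ∈ (fun ρ x => ρ fun y => f (x, y)) '' measBall Y C, ∀ x, |φ x| ≤ B := by
  obtain ⟨B, hB⟩ := hf.1
  refine ⟨C * max B 0, ?_⟩
  rintro _ ⟨ρ, ⟨-, hρC⟩, rfl⟩ x
  exact hρC _ (hf.isUb_right x) _ (le_max_right _ _) fun y => (hB _).trans (le_max_left _ _)

lemma Semiuniform.uniformEquicontinuous_image_measBall (hf : Semiuniform f) {C : ℝ}
    (hC : 0 ≤ C) : ((fun ρ x => ρ fun y => f (x, y)) '' measBall Y C).UniformEquicontinuous := by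
  refine uniformEquicontinuous_of_dist_le hf.2.1 hC ?_
  rintro _ ⟨ρ, ⟨hρ, hρC⟩, rfl⟩ x x' M hM hxx'
  rw [Real.dist_eq, ← hρ.map_sub (hf.isUb_right x) (hf.isUb_right x')]
  exact hρC _ ((hf.isUb_right x).sub (hf.isUb_right x')) M hM fun y => by
    simpa [Real.dist_eq] using hxx' y

variable {μ : (X → ℝ) → ℝ}

lemma IsUniformMeasure.isUb_sections (hu : IsUniformMeasure μ) (hμ : IsMeas μ)
    (hf : Semiuniform f) : IsUb fun y => μ fun x => f (x, y) := by
  obtain ⟨B, hB⟩ := hf.1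
  obtain ⟨Cμ, -, hCμ⟩ := hμ.exists_measNormLE
  have hrange : UniformContinuous fun φ : Set.range (fun y x => f (x, y)) => μ φ :=
    hu.uniformContinuous hμ ⟨B, Set.forall_mem_range.2 fun y x => hB (x, y)⟩
      (uniformEquicontinuous_iff_range.1 hf.2.1)
  refine ⟨hrange.comp ((uniformContinuous_pi.2 hf.2.2).subtype_mk fun y => Set.mem_range_self y),
    Cμ * max B 0, fun y => ?_⟩
  exact hCμ _ (hf.isUb_left y) _ (le_max_right _ _) fun x => (hB _).trans (le_max_left _ _)

lemma IsUniformMeasure.apply_sections_comm (hu : IsUniformMeasure μ) (hμ : IsMeas μ)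
    {ν : (Y → ℝ) → ℝ} (hν : IsMeas ν) (hf : Semiuniform f) :
    μ (fun x => ν fun y => f (x, y)) = ν fun y => μ fun x => f (x, y) := by
  obtain ⟨Cν, hCν, hνCν⟩ := hν.exists_measNormLE
  refine eq_of_forall_dist_le fun ε hε => ?_
  obtain ⟨K, δ, hδ, hK⟩ := hu _ (hf.exists_bound_image_measBall Cν)
    (hf.uniformEquicontinuous_image_measBall hCν.le) _ ⟨ν, ⟨hν, hνCν⟩, rfl⟩ (ε / 2) (half_pos hε)
  -- test functions: `y ↦ μ (f (·, y))` and the sections `f (x, ·)` for `x ∈ K`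
  obtain ⟨κ, _, c, y, hc, happrox⟩ := hν.exists_sum_mul_apply_approx hCν hνCν
    (h := fun i : Option K => i.elim (fun y => μ fun x => f (x, y)) fun x y => f (x.1, y))
    (by rintro (_ | x); exacts [hu.isUb_sections hμ hf, hf.isUb_right x.1])
    (lt_min hδ (half_pos hε))
  have hμ_sum : μ (fun x => ∑ j, c j * f (x, y j)) = ∑ j, c j * μ (fun x => f (x, y j)) :=
    hμ.map_sum_mul _ c fun j _ => hf.isUb_left (y j)
  have hμ_near := hK _ ⟨_, sum_mul_apply_mem_measBall hc y, rfl⟩ fun x hx =>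
    (happrox (some ⟨x, hx⟩)).trans_le (min_le_left _ _)
  have hν_near := (happrox none).trans_le (min_le_right _ _)
  simp only [Option.elim] at hμ_near hν_near
  rw [hμ_sum, abs_sub_lt_iff] at hμ_near
  rw [abs_sub_lt_iff] at hν_near
  rw [Real.dist_eq, abs_le]
  constructor <;> linarith

end Semiuniform

theorem stmt8 {X : Type u} [UniformSpace X] (μ : (X → ℝ) → ℝ) (hμ : IsMeas μ) :
    IsUniformMeasure μ ↔
      ∀ (Y : Type u) [UniformSpace Y] (ν : (Y → ℝ) → ℝ), IsMeas ν →
        ∀ f : X × Y → ℝ, Semiuniform f →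
          IsUb (fun y => μ fun x => f (x, y)) ∧
            μ (fun x => ν fun y => f (x, y)) = ν fun y => μ fun x => f (x, y) := by
  refine ⟨fun hu Y _ ν hν f hf => ⟨hu.isUb_sections hμ hf, hu.apply_sections_comm hμ hν hf⟩,
    fun h => isUniformMeasure_of_uniformContinuous fun H hb he => ?_⟩
  have hzero : IsMeas (0 : (H → ℝ) → ℝ) :=
    ⟨fun _ _ _ _ => (add_zero 0).symm, fun c _ _ => (mul_zero c).symm, 0, fun _ _ _ => by simp⟩
  exact (h H 0 hzero _ (semiuniform_eval hb he)).1.1
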